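/- arXiv:2412.05136 — 5 statements merged into one kernel-verified Lean document; each statement's English description precedes it below -/
import Mathlib

section
/- If |φ^T θ̂| > M, then (φ^T θ̃)² ≤ (φ^T θ̃) · |φ^T θ̂| · z̃, and moreover (φ^T θ̃) · |φ^T θ̂| · z̃ ≥ |φ^T θ̃| · (|φ^T θ̂| + M). -/
/-!
When `|a| > M` the cutoff `z` of `a = ⟪φ, θ̂⟫` sits at `±M` on the side of `a`, while
`b = ⟪φ, θ⟫` satisfies `|b| ≤ M - 2`. Hence `z - b` has the sign of `a - b` and modulus at least
`2`, so `(a - b) |a| (z - b) ≥ 2 |a - b| |a| ≥ |a - b| (|a| + M)`; the quadratic bound follows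
from `|a - b| ≤ |a| + |b| ≤ |a| + M`.
-/

section CutoffInequalities

variable {α : Type*} [CommRing α] [LinearOrder α] [IsStrictOrderedRing α] {a b M : α}

theorem two_mul_abs_sub_le_mul_cutoff_sub (hb : |b| + 2 ≤ M) (ha : M < |a|) :
    2 * |a - b| ≤ (a - b) * (max (-M) (min M a) - b) := by
  obtain ⟨hb_lo, hb_hi⟩ := abs_le.mp (le_sub_iff_add_le.mpr hb)
  rcases lt_abs.mp ha with ha_pos | ha_neg
  · have hz : max (-M) (min M a) = M := by
      rw [min_eq_left ha_pos.le, max_eq_right (by linarith)]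
    rw [hz, abs_of_pos (by linarith : 0 < a - b)]
    nlinarith
  · have hz : max (-M) (min M a) = -M := by
      rw [min_eq_right (by linarith), max_eq_left (by linarith)]
    rw [hz, abs_of_neg (by linarith : a - b < 0)]
    nlinarith

theorem abs_sub_mul_add_le_mul_cutoff_sub (hb : |b| + 2 ≤ M) (ha : M < |a|) :
    |a - b| * (|a| + M) ≤ (a - b) * |a| * (max (-M) (min M a) - b) :=
  calc |a - b| * (|a| + M) ≤ |a| * (2 * |a - b|) := by nlinarith [abs_nonneg (a - b)]
    _ ≤ |a| * ((a - b) * (max (-M) (min M a) - b)) :=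
      mul_le_mul_of_nonneg_left (two_mul_abs_sub_le_mul_cutoff_sub hb ha) (abs_nonneg a)
    _ = (a - b) * |a| * (max (-M) (min M a) - b) := by ring

theorem sq_sub_le_abs_sub_mul_add (hb : |b| ≤ M) : (a - b) ^ 2 ≤ |a - b| * (|a| + M) := by
  rw [sq, ← abs_mul_abs_self]
  exact mul_le_mul_of_nonneg_left ((abs_sub a b).trans (by gcongr)) (abs_nonneg _)

end CutoffInequalities

theorem rpfi_cutoff_inequality_general
    {n : ℕ}
    (φbar θbar : ℝ)
    (M : ℝ) (hM : M = φbar * θbar + 2)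
    (φ θhat θ : EuclideanSpace ℝ (Fin n)) (hφ : ‖φ‖ ≤ φbar) (hθ : ‖θ‖ ≤ θbar)
    (z : ℝ)
    (hz : z = max (-M) (min M (inner ℝ φ θhat : ℝ)))
    (θtil : EuclideanSpace ℝ (Fin n)) (hθtil : θtil = θhat - θ)
    (ztil : ℝ) (hztil : ztil = z - (inner ℝ φ θ : ℝ))
    (hbig : M < |(inner ℝ φ θhat : ℝ)|) :
    (inner ℝ φ θtil : ℝ) ^ 2 ≤ (inner ℝ φ θtil : ℝ) * |(inner ℝ φ θhat : ℝ)| * ztil ∧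
      |(inner ℝ φ θtil : ℝ)| * (|(inner ℝ φ θhat : ℝ)| + M) ≤
        (inner ℝ φ θtil : ℝ) * |(inner ℝ φ θhat : ℝ)| * ztil := by
  have hb : |(inner ℝ φ θ : ℝ)| + 2 ≤ M := by
    have := (abs_real_inner_le_norm φ θ).trans
      (mul_le_mul hφ hθ (norm_nonneg θ) ((norm_nonneg φ).trans hφ))
    linarith
  have key := abs_sub_mul_add_le_mul_cutoff_sub hb hbig
  rw [hθtil, inner_sub_right, hztil, hz]
  exact ⟨(sq_sub_le_abs_sub_mul_add (by linarith)).trans key, key⟩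

/-- If `|φᵀθ̂| > M`, then `(φᵀθ̃)² ≤ (φᵀθ̃)·|φᵀθ̂|·z̃`, and moreover
`(φᵀθ̃)·|φᵀθ̂|·z̃ ≥ |φᵀθ̃|·(|φᵀθ̂| + M)`. -/
theorem rpfi_cutoff_inequality
    {n : ℕ} (hn : 1 ≤ n)
    (φbar θbar : ℝ) (hφbar : 0 < φbar) (hθbar : 0 < θbar)
    (M : ℝ) (hM : M = φbar * θbar + 2)
    (φ θhat θ : EuclideanSpace ℝ (Fin n)) (hφ : ‖φ‖ ≤ φbar) (hθ : ‖θ‖ ≤ θbar)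
    (z : ℝ)
    (hz : z = max (-M) (min M (inner ℝ φ θhat : ℝ)))
    (θtil : EuclideanSpace ℝ (Fin n)) (hθtil : θtil = θhat - θ)
    (ztil : ℝ) (hztil : ztil = z - (inner ℝ φ θ : ℝ))
    (hbig : M < |(inner ℝ φ θhat : ℝ)|) :
    (inner ℝ φ θtil : ℝ) ^ 2 ≤ (inner ℝ φ θtil : ℝ) * |(inner ℝ φ θhat : ℝ)| * ztil ∧
      |(inner ℝ φ θtil : ℝ)| * (|(inner ℝ φ θhat : ℝ)| + M) ≤
        (inner ℝ φ θtil : ℝ) * |(inner ℝ φ θhat : ℝ)| * ztil :=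
  rpfi_cutoff_inequality_general φbar θbar M hM φ θhat θ hφ hθ z hz θtil hθtil ztil hztil hbig
end

section
/- For scalar quantities, if |φ θ̂| > M, then for every integer m ≥ 1: θ̃^{2m−1} · |φ θ̂| · φ · z̃ ≥ θ̃^{2m} · φ². -/
/-- For scalar quantities, if `|φθ̂| > M`, then for every integer `m ≥ 1`:
`θ̃^{2m−1}·|φθ̂|·φ·z̃ ≥ θ̃^{2m}·φ²`. -/
theorem rpfi_cutoff_inequality_scalar_high_moment
    (φbar θbar : ℝ) (hφbar : 0 < φbar) (hθbar : 0 < θbar)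
    (M : ℝ) (hM : M = φbar * θbar + 2)
    (φ θhat θ : ℝ) (hφ : |φ| ≤ φbar) (hθ : |θ| ≤ θbar)
    (z : ℝ) (hz : z = max (-M) (min M (φ * θhat)))
    (θtil : ℝ) (hθtil : θtil = θhat - θ)
    (ztil : ℝ) (hztil : ztil = z - φ * θ)
    (hbig : M < |φ * θhat|) :
    ∀ m : ℕ, 1 ≤ m →
      θtil ^ (2 * m) * φ ^ 2 ≤ θtil ^ (2 * m - 1) * |φ * θhat| * φ * ztil := by
  have hB : |φ * θ| ≤ M - 2 := by
    rw [abs_mul, hM]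
    have := mul_le_mul hφ hθ (abs_nonneg θ) (le_of_lt hφbar)
    linarith
  have hB1 := abs_le.mp hB
  have hMpos : 0 < M := by nlinarith
  have key : θtil ^ 2 * φ ^ 2 ≤ θtil * |φ * θhat| * φ * ztil := by
    rcases lt_abs.mp hbig with hA | hA
    · -- φ * θhat > M
      have hApos : 0 < φ * θhat := lt_trans hMpos hA
      have habs : |φ * θhat| = φ * θhat := abs_of_pos hApos
      have hzz : z = M := by
        rw [hz, min_eq_left (le_of_lt hA), max_eq_right (by linarith)]
      have hstep : (φ * θhat) * 2 ≤ (φ * θhat) * (M - φ * θ) :=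
        mul_le_mul_of_nonneg_left (by linarith) hApos.le
      have h3 : φ * θhat - φ * θ ≤ (φ * θhat) * (M - φ * θ) := by linarith
      have hu : (0:ℝ) ≤ φ * θhat - φ * θ := by linarith
      have hfin := mul_le_mul_of_nonneg_left h3 hu
      rw [habs, hθtil, hztil, hzz]
      nlinarith [hfin]
    · -- φ * θhat < -M
      have hA' : φ * θhat < -M := by linarith
      have hAneg : φ * θhat < 0 := by linarith
      have habs : |φ * θhat| = -(φ * θhat) := abs_of_neg hAneg
      have hzz : z = -M := by
        rw [hz, min_eq_right (by linarith), max_eq_left (by linarith)]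
      have hstep : (φ * θhat) * (M + φ * θ) ≤ (φ * θhat) * 2 :=
        mul_le_mul_of_nonpos_left (by linarith) hAneg.le
      have h3 : (φ * θhat) * (M + φ * θ) ≤ φ * θhat - φ * θ := by linarith
      have hu : φ * θhat - φ * θ ≤ 0 := by linarith
      have hfin := mul_le_mul_of_nonpos_left h3 hu
      rw [habs, hθtil, hztil, hzz]
      nlinarith [hfin]
  intro m hm
  obtain ⟨k, rfl⟩ := Nat.exists_eq_add_of_le hm
  have h1 : 2 * (1 + k) - 1 = 2 * k + 1 := by omega
  have h2 : 2 * (1 + k) = 2 * k + 2 := by omega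
  rw [h1, h2]
  have hnn : (0:ℝ) ≤ θtil ^ (2 * k) := Even.pow_nonneg (even_two_mul k) θtil
  calc θtil ^ (2 * k + 2) * φ ^ 2 = θtil ^ (2 * k) * (θtil ^ 2 * φ ^ 2) := by ring
    _ ≤ θtil ^ (2 * k) * (θtil * |φ * θhat| * φ * ztil) :=
        mul_le_mul_of_nonneg_left key hnn
    _ = θtil ^ (2 * k + 1) * |φ * θhat| * φ * ztil := by ring
end

section
/- The normalizer r_k grows linearly: 1 + β̲ n δ² N ⌊k/N⌋ ≤ r_k ≤ 1 + k β̄ φ̄² for all k ≥ 1; consequently there exist constants c₁, c₂ > 0 such that c₁/k ≤ 1/r_k ≤ c₂/k for all k ≥ 1. -/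
open Finset

open scoped RealInnerProductSpace

/-!
Taking the trace of the persistent-excitation inequality over one window of `N` regressors
gives `∑ ‖φᵢ‖² ≥ n N δ²` on every window; the `⌊k/N⌋` disjoint windows inside `[1, k]`
and `β ≥ β̲` give the lower bound, and `β ≤ β̄`, `‖φ‖ ≤ φ̄` the upper one. Since
`N ⌊k/N⌋ > k - N`, both bounds are linear in `k`, and inverting them gives `c₁, c₂`.
-/

theorem finrank_mul_le_sum_norm_sq {E ι : Type*} [NormedAddCommGroup E] [InnerProductSpace ℝ E]
    [FiniteDimensional ℝ E] (s : Finset ι) (v : ι → E) {c : ℝ}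
    (h : ∀ x : E, c * ‖x‖ ^ 2 ≤ ∑ i ∈ s, ⟪v i, x⟫ ^ 2) :
    Module.finrank ℝ E * c ≤ ∑ i ∈ s, ‖v i‖ ^ 2 := by
  let b := stdOrthonormalBasis ℝ E
  calc Module.finrank ℝ E * c = ∑ j, c * ‖b j‖ ^ 2 := by
        simp [b.orthonormal.1, mul_comm]
    _ ≤ ∑ j, ∑ i ∈ s, ⟪v i, b j⟫ ^ 2 := sum_le_sum fun j _ => h (b j)
    _ = ∑ i ∈ s, ‖v i‖ ^ 2 := by
        rw [sum_comm]
        exact sum_congr rfl fun i _ => b.sum_sq_inner_left (v i)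

section Blocks

variable {M : Type*} [AddCommMonoid M] [PartialOrder M] [IsOrderedAddMonoid M]
  {f : ℕ → M} {N : ℕ} {c : M}

theorem nsmul_le_sum_Ico_of_le_sum_blocks {a : ℕ} (h : ∀ k ≥ a, c ≤ ∑ i ∈ Ico k (k + N), f i)
    (m : ℕ) : m • c ≤ ∑ i ∈ Ico a (a + m * N), f i := by
  induction m with
  | zero => simp
  | succ m ih =>
    rw [← sum_Ico_consecutive f (Nat.le_add_right a (m * N)) (by nlinarith), succ_nsmul,
      show a + (m + 1) * N = a + m * N + N by ring]
    exact add_le_add ih (h _ (Nat.le_add_right a _))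

theorem div_nsmul_le_sum_Icc_of_le_sum_blocks (hf : ∀ i, 0 ≤ f i)
    (h : ∀ k ≥ 1, c ≤ ∑ i ∈ Ico k (k + N), f i) (k : ℕ) :
    (k / N) • c ≤ ∑ i ∈ Icc 1 k, f i := by
  have hsub : Ico 1 (1 + k / N * N) ⊆ Icc 1 k := by
    intro i hi
    have := Nat.div_mul_le_self k N
    simp only [mem_Ico, mem_Icc] at hi ⊢
    omega
  exact (nsmul_le_sum_Ico_of_le_sum_blocks h _).trans
    (sum_le_sum_of_subset_of_nonneg hsub fun i _ _ => hf i)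

end Blocks

theorem min_one_div_mul_le_one_add_mul_floor {a : ℝ} (ha : 0 ≤ a) {N : ℕ} (hN : 0 < N)
    (k : ℕ) : min 1 a / N * k ≤ 1 + a * (N * (k / N) : ℕ) := by
  set m : ℝ := ((N * (k / N) : ℕ) : ℝ)
  have hk : (k : ℝ) ≤ N * (1 + m) := by
    have h₁ : k ≤ N * (k / N) + N := by
      linarith [Nat.lt_div_mul_add (a := k) hN, mul_comm N (k / N)]
    have h₂ : N * (k / N) ≤ N * (N * (k / N)) := Nat.le_mul_of_pos_left _ hN
    have : k ≤ N * (1 + N * (k / N)) := by linarith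
    simp only [m]
    exact_mod_cast this
  calc min 1 a / N * k ≤ min 1 a / N * (N * (1 + m)) := by gcongr
    _ = min 1 a + min 1 a * m := by field_simp
    _ ≤ 1 + a * m := by gcongr <;> simp

theorem exists_div_le_one_div_le_div_of_linear_bounds {r : ℕ → ℝ} {a b : ℝ} (ha : 0 < a)
    (h : ∀ k : ℕ, 1 ≤ k → a * k ≤ r k ∧ r k ≤ b * k) :
    ∃ c₁ > 0, ∃ c₂ > 0, ∀ k : ℕ, 1 ≤ k → c₁ / k ≤ 1 / r k ∧ 1 / r k ≤ c₂ / k := by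
  have hb : 0 < b := by
    have := (h 1 le_rfl).1.trans (h 1 le_rfl).2
    push_cast at this
    linarith
  refine ⟨1 / b, by positivity, 1 / a, by positivity, fun k hk => ?_⟩
  obtain ⟨hlow, hup⟩ := h k hk
  have hk₀ : (0 : ℝ) < k := by exact_mod_cast hk
  have hr : 0 < r k := (mul_pos ha hk₀).trans_le hlow
  rw [div_div, div_div]
  exact ⟨one_div_le_one_div_of_le hr hup,
    one_div_le_one_div_of_le (by positivity) hlow⟩

/-- The normalizer `r_k` grows linearly:
`1 + β̲ n δ² N ⌊k/N⌋ ≤ r_k ≤ 1 + k β̄ φ̄²` for all `k ≥ 1`; consequently there exist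
constants `c₁, c₂ > 0` such that `c₁/k ≤ 1/r_k ≤ c₂/k` for all `k ≥ 1`. -/
theorem rpfi_normalizer_linear_growth
    {n : ℕ} (hn : 1 ≤ n)
    (φ : ℕ → EuclideanSpace ℝ (Fin n)) (φbar : ℝ) (hφ : ∀ k, ‖φ k‖ ≤ φbar)
    (N : ℕ) (hN : 1 ≤ N) (δ : ℝ) (hδ : 0 < δ)
    (hPE : ∀ k ≥ 1, ∀ x : EuclideanSpace ℝ (Fin n),
      (N : ℝ) * δ ^ 2 * ‖x‖ ^ 2 ≤ ∑ i ∈ Finset.Ico k (k + N), (inner ℝ (φ i) x : ℝ) ^ 2)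
    (β : ℕ → ℝ) (βl βu : ℝ) (hβl : 0 < βl) (hβ : ∀ k, βl ≤ β k ∧ β k ≤ βu)
    (r : ℕ → ℝ) (hr : ∀ k, r k = 1 + ∑ i ∈ Finset.Icc 1 k, β i * ‖φ i‖ ^ 2) :
    (∀ k : ℕ, 1 ≤ k →
        1 + βl * n * δ ^ 2 * (N * (k / N) : ℕ) ≤ r k ∧ r k ≤ 1 + k * βu * φbar ^ 2) ∧
      ∃ c₁ > 0, ∃ c₂ > 0, ∀ k : ℕ, 1 ≤ k →
        c₁ / k ≤ 1 / r k ∧ 1 / r k ≤ c₂ / k := by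
  have hβu : 0 ≤ βu := hβl.le.trans ((hβ 0).1.trans (hβ 0).2)
  have hblock (k : ℕ) (hk : k ≥ 1) : n * (N * δ ^ 2) ≤ ∑ i ∈ Ico k (k + N), ‖φ i‖ ^ 2 := by
    simpa using finrank_mul_le_sum_norm_sq _ φ (hPE k hk)
  have hbounds (k : ℕ) :
      1 + βl * n * δ ^ 2 * (N * (k / N) : ℕ) ≤ r k ∧ r k ≤ 1 + k * βu * φbar ^ 2 := by
    rw [hr k]
    constructor
    · calc 1 + βl * n * δ ^ 2 * (N * (k / N) : ℕ)
          = 1 + βl * ((k / N) • (n * (N * δ ^ 2))) := by push_cast; ring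
        _ ≤ 1 + βl * ∑ i ∈ Icc 1 k, ‖φ i‖ ^ 2 := by
          gcongr
          exact div_nsmul_le_sum_Icc_of_le_sum_blocks (fun i => by positivity) hblock k
        _ ≤ 1 + ∑ i ∈ Icc 1 k, β i * ‖φ i‖ ^ 2 := by
          rw [mul_sum]
          gcongr with i
          exact (hβ i).1
    · calc 1 + ∑ i ∈ Icc 1 k, β i * ‖φ i‖ ^ 2
            ≤ 1 + ∑ i ∈ Icc 1 k, βu * φbar ^ 2 := by
            gcongr with i
            exacts [(hβ i).2, hφ i]
        _ = 1 + k * βu * φbar ^ 2 := by simp [mul_assoc]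
  refine ⟨fun k _ => hbounds k,
    exists_div_le_one_div_le_div_of_linear_bounds (b := 1 + βu * φbar ^ 2)
      (by positivity : 0 < min 1 (βl * n * δ ^ 2) / N) fun k hk => ⟨?_, ?_⟩⟩
  · exact (min_one_div_mul_le_one_add_mul_floor (by positivity) hN k).trans (hbounds k).1
  · have hk₁ : (1 : ℝ) ≤ k := by exact_mod_cast hk
    nlinarith [(hbounds k).2, mul_nonneg hβu (sq_nonneg φbar)]
end

section
/- The scalar information recursion satisfies P_k > 0 and the closed form 1/P_k = 1/P_0 + ∑_{i=1}^k β_i φ_i² for all k ≥ 1; moreover, under the boundedness and persistent excitation hypotheses there exist constants c₁, c₂ > 0 such that c₁/k ≤ P_k ≤ c₂/k for all k ≥ 1. -/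
/-!
One step of the recursion is the scalar matrix-inversion lemma `P ↦ (P⁻¹ + β φ²)⁻¹`, so the
information `P_k⁻¹` is `P_0⁻¹` plus the accumulated increments `β_i φ_i²`. Each increment is at most
`β̄ φ̄²`, which bounds `P_k` from below by a multiple of `1/k`. By persistent excitation the first
`⌊k/N⌋` windows of length `N` contribute at least `⌊k/N⌋ N β̲ δ² > (k - N) β̲ δ²`, and the missing
`N` is absorbed by `P_0⁻¹`; this bounds `P_k` from above by a multiple of `1/k`.
-/

open Finset

theorem sub_mul_sq_div_one_add_mul_eq_inv {p a : ℝ} (hp : 0 < p) (ha : 0 ≤ a) :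
    p - a * p ^ 2 / (1 + a * p) = (p⁻¹ + a)⁻¹ := by
  have hden : 0 < 1 + a * p := by positivity
  field_simp
  ring

theorem pos_and_inv_eq_inv_add_sum {P a : ℕ → ℝ} (hP0 : 0 < P 0) (ha : ∀ k, 0 ≤ a k)
    (hP : ∀ k, P (k + 1) = P k - a (k + 1) * P k ^ 2 / (1 + a (k + 1) * P k)) (k : ℕ) :
    0 < P k ∧ (P k)⁻¹ = (P 0)⁻¹ + ∑ i ∈ Icc 1 k, a i := by
  induction k with
  | zero => simp [hP0]
  | succ k ih =>
    obtain ⟨hpos, hinv⟩ := ih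
    have hak := ha (k + 1)
    rw [hP k, sub_mul_sq_div_one_add_mul_eq_inv hpos hak]
    refine ⟨by positivity, ?_⟩
    rw [inv_inv, hinv, sum_Icc_succ_top (by omega), add_assoc]

theorem mul_le_sum_Ico_of_le_sum_Ico {f : ℕ → ℝ} {n₀ N : ℕ} {c : ℝ}
    (h : ∀ k ≥ n₀, c ≤ ∑ i ∈ Ico k (k + N), f i) (m : ℕ) :
    m * c ≤ ∑ i ∈ Ico n₀ (n₀ + m * N), f i := by
  induction m with
  | zero => simp
  | succ m ih =>
    rw [show n₀ + (m + 1) * N = n₀ + m * N + N by ring,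
      ← sum_Ico_consecutive f (Nat.le_add_right n₀ (m * N)) (Nat.le_add_right _ N)]
    push_cast
    linarith [h (n₀ + m * N) (Nat.le_add_right _ _)]

theorem div_mul_le_sum_Icc_of_le_sum_Ico {f : ℕ → ℝ} (hf : ∀ i, 0 ≤ f i) {N : ℕ} {c : ℝ}
    (h : ∀ k ≥ 1, c ≤ ∑ i ∈ Ico k (k + N), f i) (k : ℕ) :
    (k / N : ℕ) * c ≤ ∑ i ∈ Icc 1 k, f i := by
  refine (mul_le_sum_Ico_of_le_sum_Ico h _).trans
    (sum_le_sum_of_subset_of_nonneg ?_ fun i _ _ => hf i)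
  intro i hi
  have := Nat.div_mul_le_self k N
  simp only [mem_Ico, mem_Icc] at hi ⊢
  omega

theorem div_le_inv_inv_add_of_le_mul {p S M : ℝ} {k : ℕ} (hp : 0 < p) (hS : 0 ≤ S)
    (hk : 1 ≤ k) (hSM : S ≤ k * M) : (p⁻¹ + M)⁻¹ / k ≤ (p⁻¹ + S)⁻¹ := by
  have hk' : (1 : ℝ) ≤ k := by exact_mod_cast hk
  rw [div_eq_mul_inv, ← mul_inv]
  apply inv_anti₀ (by positivity)
  nlinarith [inv_pos.2 hp]

theorem inv_inv_add_le_div_of_mul_le {p S c : ℝ} {k N : ℕ} (hp : 0 < p) (hc : 0 < c) (hN : 1 ≤ N)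
    (hk : 1 ≤ k) (hS : (k / N : ℕ) * N * c ≤ S) : (p⁻¹ + S)⁻¹ ≤ (N * p + c⁻¹) / k := by
  have hk_lt : (k : ℝ) < (k / N : ℕ) * N + N := by exact_mod_cast Nat.lt_div_mul_add hN
  have hkN : (0 : ℝ) ≤ (k / N : ℕ) := Nat.cast_nonneg _
  have hS0 : 0 ≤ S := le_trans (by positivity) hS
  rw [le_div_iff₀ (by positivity), inv_mul_le_iff₀ (by positivity)]
  calc (k : ℝ) ≤ N + S * c⁻¹ := by
        have := mul_le_mul_of_nonneg_right hS (inv_nonneg.2 hc.le)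
        rw [mul_inv_cancel_right₀ hc.ne'] at this
        linarith
    _ ≤ (p⁻¹ + S) * (N * p + c⁻¹) := by
        have : (p⁻¹ + S) * (N * p + c⁻¹) = N + S * c⁻¹ + (p⁻¹ * c⁻¹ + S * (N * p)) := by
          field_simp
          ring
        rw [this]
        exact le_add_of_nonneg_right (by positivity)

/-- The scalar information recursion satisfies `P_k > 0` and the closed
form `1/P_k = 1/P_0 + ∑_{i=1}^k β_i φ_i²` for all `k ≥ 1`; moreover, under the
boundedness and persistent excitation hypotheses there exist constants `c₁, c₂ > 0`
such that `c₁/k ≤ P_k ≤ c₂/k` for all `k ≥ 1`. -/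
theorem scalar_information_recursion_growth
    (φ : ℕ → ℝ) (φbar : ℝ) (hφ : ∀ k, |φ k| ≤ φbar)
    (N : ℕ) (hN : 1 ≤ N) (δ : ℝ) (hδ : 0 < δ)
    (hPE : ∀ k ≥ 1, (N : ℝ) * δ ^ 2 ≤ ∑ i ∈ Finset.Ico k (k + N), (φ i) ^ 2)
    (β : ℕ → ℝ) (βl βu : ℝ) (hβl : 0 < βl) (hβ : ∀ k, βl ≤ β k ∧ β k ≤ βu)
    (P : ℕ → ℝ) (hP0 : 0 < P 0)
    (hP : ∀ k : ℕ, P (k + 1) = P k -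
      β (k + 1) * (P k) ^ 2 * (φ (k + 1)) ^ 2 / (1 + β (k + 1) * P k * (φ (k + 1)) ^ 2)) :
    (∀ k : ℕ, 1 ≤ k →
        0 < P k ∧ (P k)⁻¹ = (P 0)⁻¹ + ∑ i ∈ Finset.Icc 1 k, β i * (φ i) ^ 2) ∧
      ∃ c₁ > 0, ∃ c₂ > 0, ∀ k : ℕ, 1 ≤ k → c₁ / k ≤ P k ∧ P k ≤ c₂ / k := by
  have hβ0 (i : ℕ) : 0 ≤ β i := hβl.le.trans (hβ i).1
  have hβu : 0 ≤ βu := (hβ0 0).trans (hβ 0).2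
  have closed := pos_and_inv_eq_inv_add_sum (a := fun i => β i * φ i ^ 2) hP0
    (fun i => mul_nonneg (hβ0 i) (sq_nonneg _)) (fun k => by rw [hP k]; ring)
  refine ⟨fun k _ => closed k, ((P 0)⁻¹ + βu * φbar ^ 2)⁻¹, by positivity,
    N * P 0 + (δ ^ 2 * βl)⁻¹, by positivity, fun k hk => ?_⟩
  rw [← inv_inv (P k), (closed k).2]
  constructor
  · refine div_le_inv_inv_add_of_le_mul hP0
      (sum_nonneg fun i _ => mul_nonneg (hβ0 i) (sq_nonneg _)) hk ?_
    have hφ2 (i : ℕ) : φ i ^ 2 ≤ φbar ^ 2 := sq_le_sq' (abs_le.1 (hφ i)).1 (abs_le.1 (hφ i)).2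
    simpa using sum_le_card_nsmul (Icc 1 k) _ _
      fun i _ => mul_le_mul (hβ i).2 (hφ2 i) (sq_nonneg _) hβu
  · refine inv_inv_add_le_div_of_mul_le hP0 (by positivity) hN hk ?_
    calc ((k / N : ℕ) : ℝ) * N * (δ ^ 2 * βl) = (k / N : ℕ) * (N * δ ^ 2) * βl := by ring
      _ ≤ (∑ i ∈ Icc 1 k, φ i ^ 2) * βl := by
        gcongr
        exact div_mul_le_sum_Icc_of_le_sum_Ico (fun i => sq_nonneg _) hPE k
      _ ≤ ∑ i ∈ Icc 1 k, β i * φ i ^ 2 := by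
        rw [sum_mul]
        exact sum_le_sum fun i _ => by
          rw [mul_comm]
          exact mul_le_mul_of_nonneg_right (hβ i).1 (sq_nonneg _)
end

section
/- Suppose ∑_{i=k-N+1}^{k} φ_i φ_i^T ≥ N δ² I_n. Then for any positive nondecreasing real sequence r_i and any vectors θ̃_{k-N}, θ̃_{k-N+1}, …, θ̃_{k-1} ∈ ℝ^n: −∑_{i=k-N+1}^{k} (φ_i^T θ̃_{i-1})² / r_i ≤ −(N δ² / r_k) ‖θ̃_{k-N}‖² − 2 ∑_{i=k-N+1}^{k} ((θ̃_{i-1} − θ̃_{k-N})^T φ_i)(φ_i^T θ̃_{k-N}) / r_i. -/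
open Finset

/-! Write `c_i = ⟪φ_i, θ̃_{k-N}⟫` and `a_i = ⟪φ_i, θ̃_{i-1}⟫`. Expanding `(a_i - c_i)² ≥ 0` gives
`a_i² ≥ c_i² + 2 (a_i - c_i) c_i` termwise, and since `r_i ≤ r_k` the persistent-excitation
bound yields `∑ c_i² / r_i ≥ (∑ c_i²) / r_k ≥ N δ² ‖θ̃_{k-N}‖² / r_k`. -/

lemma sq_div_add_two_mul_sub_mul_div_le_sq_div (a c : ℝ) {r : ℝ} (hr : 0 ≤ r) :
    c ^ 2 / r + 2 * ((a - c) * c / r) ≤ a ^ 2 / r := by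
  have key : c ^ 2 + 2 * ((a - c) * c) ≤ a ^ 2 := by nlinarith [sq_nonneg (a - c)]
  calc c ^ 2 / r + 2 * ((a - c) * c / r) = (c ^ 2 + 2 * ((a - c) * c)) / r := by ring
    _ ≤ a ^ 2 / r := div_le_div_of_nonneg_right key hr

lemma sum_div_le_sum_div_of_le {ι : Type*} {s : Finset ι} {f r : ι → ℝ} {R : ℝ}
    (hf : ∀ i ∈ s, 0 ≤ f i) (hr : ∀ i ∈ s, 0 < r i) (hrR : ∀ i ∈ s, r i ≤ R) :
    (∑ i ∈ s, f i) / R ≤ ∑ i ∈ s, f i / r i := by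
  rw [sum_div]
  exact sum_le_sum fun i hi => div_le_div_of_nonneg_left (hf i hi) (hr i hi) (hrR i hi)

theorem pe_block_lower_bound_general
    {n : ℕ} (N : ℕ) (δ : ℝ)
    (k : ℕ)
    (φ : ℕ → EuclideanSpace ℝ (Fin n))
    (hPE : ∀ x : EuclideanSpace ℝ (Fin n),
      (N : ℝ) * δ ^ 2 * ‖x‖ ^ 2 ≤ ∑ i ∈ Finset.Icc (k - N + 1) k, (inner ℝ (φ i) x : ℝ) ^ 2)
    (r : ℕ → ℝ) (hr_pos : ∀ i, 0 < r i) (hr_mono : Monotone r)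
    (θtil : ℕ → EuclideanSpace ℝ (Fin n)) :
    -∑ i ∈ Finset.Icc (k - N + 1) k, (inner ℝ (φ i) (θtil (i - 1)) : ℝ) ^ 2 / r i ≤
      -((N : ℝ) * δ ^ 2 / r k) * ‖θtil (k - N)‖ ^ 2 -
        2 * ∑ i ∈ Finset.Icc (k - N + 1) k,
          (inner ℝ (φ i) (θtil (i - 1) - θtil (k - N)) : ℝ) *
            (inner ℝ (φ i) (θtil (k - N)) : ℝ) / r i := by
  set s := Icc (k - N + 1) k
  set θ₀ := θtil (k - N)
  have hexc : (N : ℝ) * δ ^ 2 / r k * ‖θ₀‖ ^ 2 ≤ ∑ i ∈ s, (inner ℝ (φ i) θ₀ : ℝ) ^ 2 / r i :=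
    calc (N : ℝ) * δ ^ 2 / r k * ‖θ₀‖ ^ 2 ≤ (∑ i ∈ s, (inner ℝ (φ i) θ₀ : ℝ) ^ 2) / r k := by
          rw [div_mul_eq_mul_div]
          exact div_le_div_of_nonneg_right (hPE θ₀) (hr_pos k).le
      _ ≤ _ := sum_div_le_sum_div_of_le (fun _ _ => sq_nonneg _) (fun i _ => hr_pos i)
          fun i hi => hr_mono (mem_Icc.mp hi).2
  have hterm : ∑ i ∈ s, ((inner ℝ (φ i) θ₀ : ℝ) ^ 2 / r i +
      2 * ((inner ℝ (φ i) (θtil (i - 1) - θ₀) : ℝ) * (inner ℝ (φ i) θ₀ : ℝ) / r i)) ≤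
      ∑ i ∈ s, (inner ℝ (φ i) (θtil (i - 1)) : ℝ) ^ 2 / r i := by
    refine sum_le_sum fun i _ => ?_
    rw [inner_sub_right]
    exact sq_div_add_two_mul_sub_mul_div_le_sq_div _ _ (hr_pos i).le
  rw [sum_add_distrib, ← mul_sum] at hterm
  linarith

/-- Suppose `∑_{i=k-N+1}^{k} φ_i φ_iᵀ ≥ N δ² I_n` (as a quadratic-form
inequality). Then for any positive nondecreasing real sequence `r_i` and any vectors
`θ̃_{k-N}, …, θ̃_{k-1} ∈ ℝⁿ`:
`−∑_{i=k-N+1}^{k} (φ_iᵀθ̃_{i-1})²/r_i ≤ −(N δ²/r_k)‖θ̃_{k-N}‖²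
  − 2 ∑_{i=k-N+1}^{k} ((θ̃_{i-1} − θ̃_{k-N})ᵀφ_i)(φ_iᵀθ̃_{k-N})/r_i`. -/
theorem pe_block_lower_bound
    {n : ℕ} (hn : 1 ≤ n) (N : ℕ) (hN : 1 ≤ N) (δ : ℝ) (hδ : 0 < δ)
    (k : ℕ) (hk : N ≤ k)
    (φ : ℕ → EuclideanSpace ℝ (Fin n))
    (hPE : ∀ x : EuclideanSpace ℝ (Fin n),
      (N : ℝ) * δ ^ 2 * ‖x‖ ^ 2 ≤ ∑ i ∈ Finset.Icc (k - N + 1) k, (inner ℝ (φ i) x : ℝ) ^ 2)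
    (r : ℕ → ℝ) (hr_pos : ∀ i, 0 < r i) (hr_mono : Monotone r)
    (θtil : ℕ → EuclideanSpace ℝ (Fin n)) :
    -∑ i ∈ Finset.Icc (k - N + 1) k, (inner ℝ (φ i) (θtil (i - 1)) : ℝ) ^ 2 / r i ≤
      -((N : ℝ) * δ ^ 2 / r k) * ‖θtil (k - N)‖ ^ 2 -
        2 * ∑ i ∈ Finset.Icc (k - N + 1) k,
          (inner ℝ (φ i) (θtil (i - 1) - θtil (k - N)) : ℝ) *
            (inner ℝ (φ i) (θtil (k - N)) : ℝ) / r i :=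
  pe_block_lower_bound_general N δ k φ hPE r hr_pos hr_mono θtil
end
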